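/- (Cancelation) Let M and N be Wall forms such that there exists an isomorphism of Wall forms M ⊕ W ≅ N ⊕ W, and suppose the complex L(M ⊕ W) is connected, i.e., any two morphisms W → M ⊕ W can be joined by a finite sequence of morphisms W → M ⊕ W in which consecutive morphisms have orthogonal images. Then there exists an isomorphism of Wall forms M ≅ N. -/

import Mathlib

/-!
Framework: `H`-pairs and Wall forms, following N. Perlmutter,
"Homological stability for the moduli spaces of products of spheres".

A form parameter `(G, ∂, π, ε)` is recorded together with the two
compatibility identities `∂(ε•h) = ∂(h)` and `π(∂(h)) = h + ε•h`, which hold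
in the geometric situation considered in the paper and which are exactly the
conditions needed for the standard Wall forms `W^g` to exist.
-/

section HPairs

/-- An `H`-pair: a pair of abelian groups together with a ℤ-bilinear
(i.e. biadditive) map `τ : M₋ × H → M₊`. -/
structure HPair (H : Type) [AddCommGroup H] where
  Neg : Type
  Pos : Type
  [negGrp : AddCommGroup Neg]
  [posGrp : AddCommGroup Pos]
  tau : Neg →+ H →+ Pos

attribute [instance] HPair.negGrp HPair.posGrp

variable {H : Type} [AddCommGroup H]

/-- An `H`-map of `H`-pairs. -/
structure HPairHom (M N : HPair H) where
  neg : M.Neg →+ N.Neg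
  pos : M.Pos →+ N.Pos
  comm : ∀ x h, pos (M.tau x h) = N.tau (neg x) h

/-- An isomorphism of `H`-pairs. -/
structure HPairIso (M N : HPair H) where
  toHom : HPairHom M N
  invHom : HPairHom N M
  left_neg : ∀ x, invHom.neg (toHom.neg x) = x
  right_neg : ∀ x, toHom.neg (invHom.neg x) = x
  left_pos : ∀ y, invHom.pos (toHom.pos y) = y
  right_pos : ∀ y, toHom.pos (invHom.pos y) = y

/-- An `H`-pair is finitely generated if both component groups are. -/
def HPair.FG (M : HPair H) : Prop :=
  AddGroup.FG M.Neg ∧ AddGroup.FG M.Pos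

/-- The componentwise direct sum of two `H`-pairs. -/
@[reducible] def HPair.sum (M N : HPair H) : HPair H where
  Neg := M.Neg × N.Neg
  Pos := M.Pos × N.Pos
  tau :=
    { toFun := fun x => (M.tau x.1).prod (N.tau x.2)
      map_zero' := by
        refine AddMonoidHom.ext fun h => ?_
        simp [Prod.ext_iff]
      map_add' := by
        intro x y
        refine AddMonoidHom.ext fun h => ?_
        simp [Prod.ext_iff] }

/-- The left inclusion `M → M ⊕ N`. -/
def HPairHom.inl (M N : HPair H) : HPairHom M (M.sum N) where
  neg := AddMonoidHom.inl M.Neg N.Neg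
  pos := AddMonoidHom.inl M.Pos N.Pos
  comm := by
    intro x h
    simp [HPair.sum, Prod.ext_iff]

/-- The right inclusion `N → M ⊕ N`. -/
def HPairHom.inr (M N : HPair H) : HPairHom N (M.sum N) where
  neg := AddMonoidHom.inr M.Neg N.Neg
  pos := AddMonoidHom.inr M.Pos N.Pos
  comm := by
    intro x h
    simp [HPair.sum, Prod.ext_iff]

/-- The `H`-pair `P⁰`, with `P⁰₋ = 0`, `P⁰₊ = ℤ` and `τ = 0`. -/
def P0 (H : Type) [AddCommGroup H] : HPair H where
  Neg := PUnit
  Pos := ℤ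
  tau := 0

/-- The `H`-pair `P¹`, with `P¹₋ = ℤ`, `P¹₊ = H` and `τ(t, h) = t • h`. -/
def P1 (H : Type) [AddCommGroup H] : HPair H where
  Neg := ℤ
  Pos := H
  tau := zmultiplesHom (H →+ H) (AddMonoidHom.id H)

/-- The generating-set length `d(H)`: the minimal `k` such that there is a
surjection `ℤ^k → H`. -/
noncomputable def dlen (H : Type) [AddCommGroup H] : ℕ :=
  sInf { k : ℕ | ∃ φ : (Fin k → ℤ) →+ H, Function.Surjective φ }

end HPairs

section WallForms

variable {H : Type} [AddCommGroup H]

/-- A form parameter `(G, ∂, π, ε)` for the category of `H`-pairs.  The two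
compatibility identities `bd_eps` and `pi_bd` hold in the geometric setting of
the paper and are needed for the standard Wall forms to exist. -/
structure FormParameter (H : Type) [AddCommGroup H] where
  G : HPair H
  bd : H →+ G.Pos
  pi : G.Pos →+ H
  eps : ℤ
  eps_pm : eps = 1 ∨ eps = -1
  bd_eps : ∀ h : H, bd (eps • h) = bd h
  pi_bd : ∀ h : H, pi (bd h) = h + eps • h

variable {P : FormParameter H}

/-- A Wall form structure (with parameter `P`) on the `H`-pair `C`. -/
structure WallAux (P : FormParameter H) (C : HPair H) where
  lam : C.Neg →+ C.Pos →+ ℤ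
  mu : C.Pos →+ C.Pos →+ H
  alphaNeg : C.Neg →+ P.G.Neg
  alphaPos : C.Pos → P.G.Pos
  mu_symm : ∀ y y', mu y y' = P.eps • mu y' y
  lam_tau : ∀ x x' h, lam x (C.tau x' h) = 0
  mu_tau : ∀ x h y, mu (C.tau x h) y = lam x y • h
  alphaPos_add : ∀ y y', alphaPos (y + y') = alphaPos y + alphaPos y' + P.bd (mu y y')
  mu_diag : ∀ y, mu y y = P.pi (alphaPos y)
  alphaPos_tau : ∀ x h, alphaPos (C.tau x h) = P.G.tau (alphaNeg x) h

/-- A Wall form with parameter `P`: a finitely generated `H`-pair together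
with a Wall form structure. -/
structure WallForm (P : FormParameter H) where
  carrier : HPair H
  fgNeg : AddGroup.FG carrier.Neg
  fgPos : AddGroup.FG carrier.Pos
  str : WallAux P carrier

/-- The property of an `H`-map to preserve all values of `λ`, `μ`, `α₋`, `α₊`. -/
def IsWallHom {C D : HPair H} (S : WallAux P C) (T : WallAux P D)
    (f : HPairHom C D) : Prop :=
  (∀ x y, T.lam (f.neg x) (f.pos y) = S.lam x y) ∧
  (∀ y y', T.mu (f.pos y) (f.pos y') = S.mu y y') ∧
  (∀ x, T.alphaNeg (f.neg x) = S.alphaNeg x) ∧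
  (∀ y, T.alphaPos (f.pos y) = S.alphaPos y)

/-- A morphism of Wall forms. -/
structure WallHom (M N : WallForm P) where
  hom : HPairHom M.carrier N.carrier
  isWall : IsWallHom M.str N.str hom

/-- An isomorphism of Wall forms: a morphism with a two-sided inverse morphism. -/
structure WallIso (M N : WallForm P) where
  toHom : WallHom M N
  invHom : WallHom N M
  left_neg : ∀ x, invHom.hom.neg (toHom.hom.neg x) = x
  right_neg : ∀ x, toHom.hom.neg (invHom.hom.neg x) = x
  left_pos : ∀ y, invHom.hom.pos (toHom.hom.pos y) = y
  right_pos : ∀ y, toHom.hom.pos (invHom.hom.pos y) = y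

end WallForms
section Extra

variable {H : Type} [AddCommGroup H] {P : FormParameter H}

/-- A subgroup of a finitely generated abelian group is finitely generated. -/
theorem addGroup_fg_subgroup {A : Type} [AddCommGroup A] (hA : AddGroup.FG A)
    (S : AddSubgroup A) : AddGroup.FG S := by
  haveI : Module.Finite ℤ A := Module.Finite.iff_addGroup_fg.mpr hA
  haveI : IsNoetherian ℤ A := isNoetherian_of_isNoetherianRing_of_finite ℤ A
  have h : (AddSubgroup.toIntSubmodule S).FG := IsNoetherian.noetherian _
  have h2 : Module.Finite ℤ (AddSubgroup.toIntSubmodule S) := Module.Finite.iff_fg.mpr h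
  exact Module.Finite.iff_addGroup_fg.mp h2

theorem addGroup_fg_of_module_finite {A : Type} [AddCommGroup A]
    [Module.Finite ℤ A] : AddGroup.FG A :=
  Module.Finite.iff_addGroup_fg.mp inferInstance

end Extra

section StdWall

variable {H : Type} [AddCommGroup H]

/-- The underlying `H`-pair of the standard Wall form of rank `g`:
`W^g₋ = ℤ^g` and `W^g₊ = ℤ^g × H^g`  (the first factor records the
`b`-coordinates, the second the `τ(a_i, -)`-coordinates). -/
@[reducible] def stdPair (H : Type) [AddCommGroup H] (g : ℕ) : HPair H where
  Neg := Fin g → ℤ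
  Pos := (Fin g → ℤ) × (Fin g → H)
  tau :=
    { toFun := fun x =>
        { toFun := fun h => (0, fun i => x i • h)
          map_zero' := by
            refine Prod.ext rfl ?_
            funext i
            simp
          map_add' := by
            intro h h'
            refine Prod.ext (by simp) ?_
            funext i
            simp [smul_add] }
      map_zero' := by
        refine AddMonoidHom.ext fun h => ?_
        refine Prod.ext rfl ?_
        funext i
        simp
      map_add' := by
        intro x x'
        refine AddMonoidHom.ext fun h => ?_
        refine Prod.ext (by simp) ?_
        funext i
        simp [add_smul] }

variable (P : FormParameter H)

/-- The standard Wall form `W^g` of rank `g` with parameter `P`. -/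
def stdWall [AddGroup.FG H] (g : ℕ) : WallForm P where
  carrier := stdPair H g
  fgNeg := by
    have : Module.Finite ℤ (Fin g → ℤ) := inferInstance
    exact addGroup_fg_of_module_finite
  fgPos := by
    haveI : Module.Finite ℤ H := Module.Finite.iff_addGroup_fg.mpr ‹AddGroup.FG H›
    have : Module.Finite ℤ ((Fin g → ℤ) × (Fin g → H)) := inferInstance
    exact addGroup_fg_of_module_finite
  str :=
    { lam :=
        { toFun := fun x =>
            { toFun := fun w => ∑ i, x i * w.1 i
              map_zero' := by simp
              map_add' := by
                intro w w'
                simp [mul_add, Finset.sum_add_distrib] }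
          map_zero' := by
            refine AddMonoidHom.ext fun w => ?_
            show (∑ i, (0 : Fin g → ℤ) i * w.1 i) = 0
            simp
          map_add' := by
            intro x x'
            refine AddMonoidHom.ext fun w => ?_
            simp [add_mul, Finset.sum_add_distrib] }
      mu :=
        { toFun := fun w =>
            { toFun := fun w' => (∑ i, w'.1 i • w.2 i) + P.eps • ∑ i, w.1 i • w'.2 i
              map_zero' := by simp
              map_add' := by
                intro w' w''
                simp only [Prod.fst_add, Prod.snd_add, Pi.add_apply, add_smul, smul_add,
                  Finset.sum_add_distrib]
                abel }
          map_zero' := by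
            refine AddMonoidHom.ext fun w' => ?_
            simp
          map_add' := by
            intro w w'
            refine AddMonoidHom.ext fun w'' => ?_
            simp only [Prod.fst_add, Prod.snd_add, Pi.add_apply, add_smul, smul_add,
              Finset.sum_add_distrib, AddMonoidHom.coe_mk, ZeroHom.coe_mk,
              AddMonoidHom.add_apply]
            abel }
      alphaNeg := 0
      alphaPos := fun w => P.bd (∑ i, w.1 i • w.2 i)
      mu_symm := by
        intro y y'
        have he : P.eps * P.eps = 1 := by
          rcases P.eps_pm with h | h <;> simp [h]
        show (∑ i, y'.1 i • y.2 i) + P.eps • ∑ i, y.1 i • y'.2 i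
            = P.eps • ((∑ i, y.1 i • y'.2 i) + P.eps • ∑ i, y'.1 i • y.2 i)
        rw [smul_add, smul_smul, he, one_smul, add_comm]
      lam_tau := by
        intro x x' h
        show (∑ i, x i * (0 : Fin _ → ℤ) i) = 0
        simp
      mu_tau := by
        intro x h y
        show (∑ i, y.1 i • (fun i => x i • h) i) + P.eps • ∑ i, (0 : Fin _ → ℤ) i • y.2 i
            = (∑ i, x i * y.1 i) • h
        simp only [Pi.zero_apply, zero_smul, Finset.sum_const_zero, smul_zero, add_zero]
        rw [Finset.sum_smul]
        congr 1
        funext i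
        rw [smul_smul, mul_comm]
      alphaPos_add := by
        intro y y'
        show P.bd (∑ i, (y.1 i + y'.1 i) • (y.2 i + y'.2 i))
            = P.bd (∑ i, y.1 i • y.2 i) + P.bd (∑ i, y'.1 i • y'.2 i)
              + P.bd ((∑ i, y'.1 i • y.2 i) + P.eps • ∑ i, y.1 i • y'.2 i)
        have expand : ∀ i : Fin _, (y.1 i + y'.1 i) • (y.2 i + y'.2 i)
            = (y.1 i • y.2 i + y'.1 i • y'.2 i) + (y'.1 i • y.2 i + y.1 i • y'.2 i) := by
          intro i
          rw [add_smul, smul_add, smul_add]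
          abel
        rw [Finset.sum_congr rfl fun i _ => expand i, Finset.sum_add_distrib,
          Finset.sum_add_distrib, Finset.sum_add_distrib, map_add, map_add, map_add, map_add,
          P.bd_eps]
      mu_diag := by
        intro y
        show (∑ i, y.1 i • y.2 i) + P.eps • ∑ i, y.1 i • y.2 i
            = P.pi (P.bd (∑ i, y.1 i • y.2 i))
        rw [P.pi_bd]
      alphaPos_tau := by
        intro x h
        show P.bd (∑ i, (0 : Fin _ → ℤ) i • (fun i => x i • h) i) = P.G.tau ((0 : _ →+ _) x) h
        simp }

variable {P}

/-- The `i`-th standard generator `a_i ∈ W^g₋`. -/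
def stdA [AddGroup.FG H] {g : ℕ} (i : Fin g) : (stdWall P g).carrier.Neg :=
  Pi.single i 1

/-- The `i`-th standard generator `b_i ∈ W^g₊`. -/
def stdB [AddGroup.FG H] {g : ℕ} (i : Fin g) : (stdWall P g).carrier.Pos :=
  (Pi.single i 1, 0)

end StdWall
section SubPairs

variable {H : Type} [AddCommGroup H] {P : FormParameter H}

/-- A sub-`H`-pair of the `H`-pair `C`. -/
structure SubPair (C : HPair H) where
  neg : AddSubgroup C.Neg
  pos : AddSubgroup C.Pos
  tau_mem : ∀ x ∈ neg, ∀ h, C.tau x h ∈ pos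

/-- The componentwise intersection of two sub-`H`-pairs. -/
def SubPair.inf {C : HPair H} (N N' : SubPair C) : SubPair C where
  neg := N.neg ⊓ N'.neg
  pos := N.pos ⊓ N'.pos
  tau_mem := fun x hx h => ⟨N.tau_mem x hx.1 h, N'.tau_mem x hx.2 h⟩

/-- The image of an `H`-map, as a sub-`H`-pair of the codomain. -/
def HPairHom.rangeSub {C D : HPair H} (f : HPairHom C D) : SubPair D where
  neg := f.neg.range
  pos := f.pos.range
  tau_mem := by
    rintro x ⟨a, rfl⟩ h
    exact ⟨C.tau a h, f.comm a h⟩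

/-- The kernel of an `H`-map, as a sub-`H`-pair of the domain. -/
def HPairHom.kerSub {C D : HPair H} (f : HPairHom C D) : SubPair C where
  neg := f.neg.ker
  pos := f.pos.ker
  tau_mem := by
    intro x hx h
    have hx' : f.neg x = 0 := hx
    have h2 : f.pos (C.tau x h) = D.tau (f.neg x) h := f.comm x h
    rw [hx'] at h2
    have h3 : f.pos (C.tau x h) = 0 := by
      rw [h2, map_zero, AddMonoidHom.zero_apply]
    exact h3

/-- The orthogonal complement of a sub-`H`-pair, with respect to a Wall form
structure `S` on the ambient `H`-pair. -/
def SubPair.perp {C : HPair H} (S : WallAux P C) (N : SubPair C) : SubPair C where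
  neg :=
    { carrier := { x | ∀ w ∈ N.pos, S.lam x w = 0 }
      add_mem' := by
        intro a b ha hb w hw
        rw [map_add, AddMonoidHom.add_apply, ha w hw, hb w hw, add_zero]
      zero_mem' := by
        intro w hw
        rw [map_zero, AddMonoidHom.zero_apply]
      neg_mem' := by
        intro a ha w hw
        rw [map_neg, AddMonoidHom.neg_apply, ha w hw, neg_zero] }
  pos :=
    { carrier := { y | (∀ v ∈ N.neg, S.lam v y = 0) ∧ ∀ w ∈ N.pos, S.mu y w = 0 }
      add_mem' := by
        intro a b ha hb
        refine ⟨fun v hv => ?_, fun w hw => ?_⟩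
        · rw [map_add, ha.1 v hv, hb.1 v hv, add_zero]
        · rw [map_add, AddMonoidHom.add_apply, ha.2 w hw, hb.2 w hw, add_zero]
      zero_mem' := by
        refine ⟨fun v hv => ?_, fun w hw => ?_⟩
        · rw [map_zero]
        · rw [map_zero, AddMonoidHom.zero_apply]
      neg_mem' := by
        intro a ha
        refine ⟨fun v hv => ?_, fun w hw => ?_⟩
        · rw [map_neg, ha.1 v hv, neg_zero]
        · rw [map_neg, AddMonoidHom.neg_apply, ha.2 w hw, neg_zero] }
  tau_mem := by
    intro x hx h
    refine ⟨fun v hv => S.lam_tau v x h, fun w hw => ?_⟩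
    rw [S.mu_tau x h w, hx w hw, zero_smul]

/-- Orthogonality of two sub-`H`-pairs with respect to a Wall form structure
`S`: trivial intersection and mutual containment in orthogonal complements. -/
def OrthogonalIn {C : HPair H} (S : WallAux P C) (N N' : SubPair C) : Prop :=
  N.neg ⊓ N'.neg = ⊥ ∧ N.pos ⊓ N'.pos = ⊥ ∧
  N.neg ≤ (N'.perp S).neg ∧ N.pos ≤ (N'.perp S).pos ∧
  N'.neg ≤ (N.perp S).neg ∧ N'.pos ≤ (N.perp S).pos

/-- The underlying `H`-pair of a sub-`H`-pair. -/
@[reducible] def SubPair.toPair {C : HPair H} (N : SubPair C) : HPair H where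
  Neg := N.neg
  Pos := N.pos
  tau :=
    { toFun := fun x =>
        { toFun := fun h => ⟨C.tau x h, N.tau_mem x x.2 h⟩
          map_zero' := by
            apply Subtype.ext
            simp
          map_add' := by
            intro h h'
            apply Subtype.ext
            simp }
      map_zero' := by
        refine AddMonoidHom.ext fun h => ?_
        apply Subtype.ext
        simp
      map_add' := by
        intro x x'
        refine AddMonoidHom.ext fun h => ?_
        apply Subtype.ext
        simp }

/-- The restriction of a Wall form structure to a sub-`H`-pair. -/
def SubPair.restrict {C : HPair H} (S : WallAux P C) (N : SubPair C) :
    WallAux P N.toPair where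
  lam :=
    { toFun := fun x => (S.lam (x : C.Neg)).comp N.pos.subtype
      map_zero' := by
        refine AddMonoidHom.ext fun y => ?_
        simp
      map_add' := by
        intro x x'
        refine AddMonoidHom.ext fun y => ?_
        simp }
  mu :=
    { toFun := fun y => (S.mu (y : C.Pos)).comp N.pos.subtype
      map_zero' := by
        refine AddMonoidHom.ext fun y => ?_
        simp
      map_add' := by
        intro y y'
        refine AddMonoidHom.ext fun y'' => ?_
        simp }
  alphaNeg := S.alphaNeg.comp N.neg.subtype
  alphaPos := fun y => S.alphaPos (y : C.Pos)
  mu_symm := fun y y' => S.mu_symm (y : C.Pos) y'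
  lam_tau := fun x x' h => S.lam_tau (x : C.Neg) x' h
  mu_tau := fun x h y => S.mu_tau (x : C.Neg) h y
  alphaPos_add := fun y y' => S.alphaPos_add (y : C.Pos) y'
  mu_diag := fun y => S.mu_diag (y : C.Pos)
  alphaPos_tau := fun x h => S.alphaPos_tau (x : C.Neg) h

/-- A sub-`H`-pair of (the carrier of) a Wall form is itself a Wall form, via
the restricted structure maps. -/
def SubPair.toWall {M : WallForm P} (N : SubPair M.carrier) : WallForm P where
  carrier := N.toPair
  fgNeg := addGroup_fg_subgroup M.fgNeg N.neg
  fgPos := addGroup_fg_subgroup M.fgPos N.pos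
  str := N.restrict M.str

end SubPairs
section SumAndRank

variable {H : Type} [AddCommGroup H] {P : FormParameter H}

/-- The orthogonal direct sum of two Wall forms. -/
def WallForm.sum (M N : WallForm P) : WallForm P where
  carrier := M.carrier.sum N.carrier
  fgNeg := by
    haveI : Module.Finite ℤ M.carrier.Neg := Module.Finite.iff_addGroup_fg.mpr M.fgNeg
    haveI : Module.Finite ℤ N.carrier.Neg := Module.Finite.iff_addGroup_fg.mpr N.fgNeg
    have : Module.Finite ℤ (M.carrier.Neg × N.carrier.Neg) := inferInstance
    exact Module.Finite.iff_addGroup_fg.mp this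
  fgPos := by
    haveI : Module.Finite ℤ M.carrier.Pos := Module.Finite.iff_addGroup_fg.mpr M.fgPos
    haveI : Module.Finite ℤ N.carrier.Pos := Module.Finite.iff_addGroup_fg.mpr N.fgPos
    have : Module.Finite ℤ (M.carrier.Pos × N.carrier.Pos) := inferInstance
    exact Module.Finite.iff_addGroup_fg.mp this
  str :=
    { lam :=
        { toFun := fun x => (M.str.lam x.1).coprod (N.str.lam x.2)
          map_zero' := by
            refine AddMonoidHom.ext fun y => ?_
            simp
          map_add' := by
            intro x x'
            refine AddMonoidHom.ext fun y => ?_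
            simp
            abel }
      mu :=
        { toFun := fun y => (M.str.mu y.1).coprod (N.str.mu y.2)
          map_zero' := by
            refine AddMonoidHom.ext fun y' => ?_
            simp
          map_add' := by
            intro y y'
            refine AddMonoidHom.ext fun y'' => ?_
            simp
            abel }
      alphaNeg := (M.str.alphaNeg).coprod (N.str.alphaNeg)
      alphaPos := fun y => M.str.alphaPos y.1 + N.str.alphaPos y.2
      mu_symm := by
        intro y y'
        show M.str.mu y.1 y'.1 + N.str.mu y.2 y'.2
            = P.eps • (M.str.mu y'.1 y.1 + N.str.mu y'.2 y.2)
        rw [smul_add, M.str.mu_symm y.1 y'.1, N.str.mu_symm y.2 y'.2]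
      lam_tau := by
        intro x x' h
        show M.str.lam x.1 (M.carrier.tau x'.1 h) + N.str.lam x.2 (N.carrier.tau x'.2 h) = 0
        rw [M.str.lam_tau, N.str.lam_tau, add_zero]
      mu_tau := by
        intro x h y
        show M.str.mu (M.carrier.tau x.1 h) y.1 + N.str.mu (N.carrier.tau x.2 h) y.2
            = (M.str.lam x.1 y.1 + N.str.lam x.2 y.2) • h
        rw [M.str.mu_tau, N.str.mu_tau, add_smul]
      alphaPos_add := by
        intro y y'
        show M.str.alphaPos (y.1 + y'.1) + N.str.alphaPos (y.2 + y'.2)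
            = (M.str.alphaPos y.1 + N.str.alphaPos y.2)
              + (M.str.alphaPos y'.1 + N.str.alphaPos y'.2)
              + P.bd (M.str.mu y.1 y'.1 + N.str.mu y.2 y'.2)
        rw [M.str.alphaPos_add, N.str.alphaPos_add, map_add]
        abel
      mu_diag := by
        intro y
        show M.str.mu y.1 y.1 + N.str.mu y.2 y.2
            = P.pi (M.str.alphaPos y.1 + N.str.alphaPos y.2)
        rw [map_add, M.str.mu_diag, N.str.mu_diag]
      alphaPos_tau := by
        intro x h
        show M.str.alphaPos (M.carrier.tau x.1 h) + N.str.alphaPos (N.carrier.tau x.2 h)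
            = P.G.tau (M.str.alphaNeg x.1 + N.str.alphaNeg x.2) h
        rw [M.str.alphaPos_tau, N.str.alphaPos_tau, map_add, AddMonoidHom.add_apply] }

variable [AddGroup.FG H]

/-- `rankGE M g` expresses the inequality `r(M) ≥ g` for the rank of a Wall
form: there exists a morphism of Wall forms `W^g → M`. -/
def rankGE (M : WallForm P) (g : ℕ) : Prop :=
  Nonempty (WallHom (stdWall P g) M)

/-- `srankGE M g` expresses the inequality `r̄(M) ≥ g` for the stable rank of
a Wall form: `r(M ⊕ W^j) ≥ g + j` for some `j`. -/
def srankGE (M : WallForm P) (g : ℕ) : Prop :=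
  ∃ j : ℕ, rankGE (M.sum (stdWall P j)) (g + j)

end SumAndRank

section Duality

variable {H : Type} [AddCommGroup H] {P : FormParameter H}

/-- The duality map `T⁰ : M₋ → Hom(M, P⁰)` of a Wall form. -/
def dualT0 (M : WallForm P) (v : M.carrier.Neg) : HPairHom M.carrier (P0 H) where
  neg := 0
  pos := M.str.lam v
  comm := by
    intro x h
    show M.str.lam v (M.carrier.tau x h) = ((P0 H).tau 0) h
    rw [M.str.lam_tau]
    show (0 : ℤ) = ((0 : _ →+ (H →+ ℤ)) 0) h
    rfl

/-- The duality map `T¹ : M₊ → Hom(M, P¹)` of a Wall form. -/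
def dualT1 (M : WallForm P) (w : M.carrier.Pos) : HPairHom M.carrier (P1 H) where
  neg := M.str.lam.flip w
  pos := M.str.mu.flip w
  comm := by
    intro x h
    show M.str.mu (M.carrier.tau x h) w = (P1 H).tau (M.str.lam x w) h
    rw [M.str.mu_tau]
    show M.str.lam x w • h = (M.str.lam x w • AddMonoidHom.id H) h
    simp

end Duality

/-!
For orthogonal morphisms `f, g : W → X`, the complements `f^⊥` and `g^⊥` are isomorphic: the
automorphism of `X` swapping the hyperbolic summands `f(W)` and `g(W)` restricts to an isomorphism
`f^⊥ ≅ g^⊥`. Connectivity of `L(M ⊕ W)` chains such isomorphisms from the standard inclusion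
`ι_M : W → M ⊕ W` to `e⁻¹ ∘ ι_N`. Finally `ι_M^⊥ ≅ M`, and `e` carries `(e⁻¹ ∘ ι_N)^⊥` onto
`ι_N^⊥ ≅ N`.
-/

section Category

variable {H : Type} [AddCommGroup H] {P : FormParameter H}

def HPairHom.comp {A B C : HPair H} (g : HPairHom B C) (f : HPairHom A B) : HPairHom A C where
  neg := g.neg.comp f.neg
  pos := g.pos.comp f.pos
  comm x h := by simp [f.comm, g.comm]

def WallHom.comp {A B C : WallForm P} (g : WallHom B C) (f : WallHom A B) : WallHom A C where
  hom := g.hom.comp f.hom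
  isWall :=
    ⟨fun x y => (g.isWall.1 _ _).trans (f.isWall.1 x y),
     fun y y' => (g.isWall.2.1 _ _).trans (f.isWall.2.1 y y'),
     fun x => (g.isWall.2.2.1 _).trans (f.isWall.2.2.1 x),
     fun y => (g.isWall.2.2.2 _).trans (f.isWall.2.2.2 y)⟩

def WallHom.id (A : WallForm P) : WallHom A A where
  hom := ⟨AddMonoidHom.id _, AddMonoidHom.id _, fun _ _ => rfl⟩
  isWall := ⟨fun _ _ => rfl, fun _ _ => rfl, fun _ => rfl, fun _ => rfl⟩

def WallIso.refl (A : WallForm P) : WallIso A A where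
  toHom := WallHom.id A
  invHom := WallHom.id A
  left_neg _ := rfl
  right_neg _ := rfl
  left_pos _ := rfl
  right_pos _ := rfl

def WallIso.symm {A B : WallForm P} (e : WallIso A B) : WallIso B A where
  toHom := e.invHom
  invHom := e.toHom
  left_neg := e.right_neg
  right_neg := e.left_neg
  left_pos := e.right_pos
  right_pos := e.left_pos

def WallIso.trans {A B C : WallForm P} (e : WallIso A B) (e' : WallIso B C) : WallIso A C where
  toHom := e'.toHom.comp e.toHom
  invHom := e.invHom.comp e'.invHom
  left_neg x := (congrArg e.invHom.hom.neg (e'.left_neg _)).trans (e.left_neg x)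
  right_neg x := (congrArg e'.toHom.hom.neg (e.right_neg _)).trans (e'.right_neg x)
  left_pos y := (congrArg e.invHom.hom.pos (e'.left_pos _)).trans (e.left_pos y)
  right_pos y := (congrArg e'.toHom.hom.pos (e.right_pos _)).trans (e'.right_pos y)

end Category

section Restriction

variable {H : Type} [AddCommGroup H] {P : FormParameter H}

def HPairHom.MapsTo {C D : HPair H} (f : HPairHom C D) (N : SubPair C) (N' : SubPair D) : Prop :=
  Set.MapsTo f.neg N.neg N'.neg ∧ Set.MapsTo f.pos N.pos N'.pos

def HPairHom.LeftInvOn {C D : HPair H} (g : HPairHom D C) (f : HPairHom C D) (N : SubPair C) :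
    Prop :=
  Set.LeftInvOn g.neg f.neg N.neg ∧ Set.LeftInvOn g.pos f.pos N.pos

def HPairHom.restrict {C D : HPair H} (f : HPairHom C D) {N : SubPair C} {N' : SubPair D}
    (h : f.MapsTo N N') : HPairHom N.toPair N'.toPair where
  neg := (f.neg.domRestrict N.neg).codRestrict N'.neg fun x => h.1 x.2
  pos := (f.pos.domRestrict N.pos).codRestrict N'.pos fun y => h.2 y.2
  comm x h := Subtype.ext (f.comm x h)

theorem WallHom.isWallHom_restrict {X Y : WallForm P} (φ : WallHom X Y) {N : SubPair X.carrier}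
    {N' : SubPair Y.carrier} (h : φ.hom.MapsTo N N') :
    IsWallHom (N.restrict X.str) (N'.restrict Y.str) (φ.hom.restrict h) :=
  ⟨fun x y => φ.isWall.1 x y, fun y y' => φ.isWall.2.1 y y', fun x => φ.isWall.2.2.1 x,
    fun y => φ.isWall.2.2.2 y⟩

def WallIso.ofInvOn {X Y : WallForm P} {N : SubPair X.carrier} {N' : SubPair Y.carrier}
    (f : HPairHom X.carrier Y.carrier) (g : HPairHom Y.carrier X.carrier)
    (hf : f.MapsTo N N') (hg : g.MapsTo N' N)
    (hfw : IsWallHom (N.restrict X.str) (N'.restrict Y.str) (f.restrict hf))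
    (hgw : IsWallHom (N'.restrict Y.str) (N.restrict X.str) (g.restrict hg))
    (hgf : g.LeftInvOn f N) (hfg : f.LeftInvOn g N') : WallIso N.toWall N'.toWall where
  toHom := ⟨f.restrict hf, hfw⟩
  invHom := ⟨g.restrict hg, hgw⟩
  left_neg x := Subtype.ext (hgf.1 x.2)
  right_neg x := Subtype.ext (hfg.1 x.2)
  left_pos y := Subtype.ext (hgf.2 y.2)
  right_pos y := Subtype.ext (hfg.2 y.2)

theorem OrthogonalIn.symm {C : HPair H} {S : WallAux P C} {N N' : SubPair C}
    (h : OrthogonalIn S N N') : OrthogonalIn S N' N := by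
  obtain ⟨hneg, hpos, h₁, h₂, h₃, h₄⟩ := h
  exact ⟨inf_comm N'.neg N.neg ▸ hneg, inf_comm N'.pos N.pos ▸ hpos, h₃, h₄, h₁, h₂⟩

end Restriction

namespace WallAux

variable {H : Type} [AddCommGroup H] {P : FormParameter H} {C : HPair H} (S : WallAux P C)

theorem alphaPos_zero : S.alphaPos 0 = 0 := by
  have h := S.alphaPos_add 0 0
  rwa [add_zero, map_zero, map_zero, add_zero, left_eq_add] at h

theorem mu_tau_right (y : C.Pos) (x : C.Neg) (h : H) :
    S.mu y (C.tau x h) = P.eps • (S.lam x y • h) := by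
  rw [S.mu_symm, S.mu_tau]

theorem alphaPos_zsmul_of_mu_self_eq_zero {v : C.Pos} (hv : S.mu v v = 0) (n : ℤ) :
    S.alphaPos (n • v) = n • S.alphaPos v := by
  let φ : ℤ →+ P.G.Pos := AddMonoidHom.mk' (fun k => S.alphaPos (k • v)) fun m k => by
    simp [add_smul, S.alphaPos_add, hv]
  simpa [φ] using map_zsmul φ n 1

end WallAux

section Generators

variable {H : Type} [AddCommGroup H] [AddGroup.FG H] {P : FormParameter H} {X : WallForm P}

def WallHom.a (f : WallHom (stdWall P 1) X) : X.carrier.Neg := f.hom.neg (stdA 0)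

def WallHom.b (f : WallHom (stdWall P 1) X) : X.carrier.Pos := f.hom.pos (stdB 0)

theorem stdWall_one_neg_eq (x : (stdWall P 1).carrier.Neg) : x = x 0 • stdA (P := P) 0 := by
  funext i
  fin_cases i
  change x 0 = x 0 * (Pi.single 0 1 : Fin 1 → ℤ) 0
  simp

theorem stdWall_one_pos_eq (y : (stdWall P 1).carrier.Pos) :
    y = y.1 0 • stdB 0 + (stdWall P 1).carrier.tau (stdA 0) (y.2 0) := by
  refine Prod.ext (funext fun i => ?_) (funext fun i => ?_) <;> fin_cases i
  · change y.1 0 = y.1 0 * (Pi.single 0 1 : Fin 1 → ℤ) 0 + 0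
    simp
  · change y.2 0 = y.1 0 • (0 : H) + (Pi.single 0 1 : Fin 1 → ℤ) 0 • y.2 0
    simp

namespace WallHom

variable (f : WallHom (stdWall P 1) X)

theorem neg_apply_eq (x : (stdWall P 1).carrier.Neg) : f.hom.neg x = x 0 • f.a := by
  conv_lhs => rw [stdWall_one_neg_eq x]
  exact map_zsmul _ _ _

theorem pos_apply_eq (y : (stdWall P 1).carrier.Pos) :
    f.hom.pos y = y.1 0 • f.b + X.carrier.tau f.a (y.2 0) := by
  conv_lhs => rw [stdWall_one_pos_eq y]
  rw [map_add, map_zsmul, f.hom.comm]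
  rfl

theorem lam_a_b : X.str.lam f.a f.b = 1 := by
  rw [a, b, f.isWall.1]
  change ∑ i : Fin 1, stdA (P := P) 0 i * (stdB (P := P) 0).1 i = 1
  simp [stdA, stdB]

theorem mu_b_b : X.str.mu f.b f.b = 0 := by
  rw [b, f.isWall.2.1]
  change ∑ i : Fin 1, (stdB (P := P) 0).1 i • (0 : H) + P.eps • ∑ i : Fin 1, _ • (0 : H) = 0
  simp

theorem alphaNeg_a : X.str.alphaNeg f.a = 0 := by
  rw [a, f.isWall.2.2.1]
  rfl

theorem alphaPos_b : X.str.alphaPos f.b = 0 := by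
  rw [b, f.isWall.2.2.2]
  simp [stdWall, stdB]

abbrev perp : SubPair X.carrier := f.hom.rangeSub.perp X.str

theorem mem_perp_neg_iff (x : X.carrier.Neg) : x ∈ f.perp.neg ↔ X.str.lam x f.b = 0 := by
  refine ⟨fun hx => hx f.b ⟨stdB 0, rfl⟩, ?_⟩
  rintro hx _ ⟨y, rfl⟩
  rw [f.pos_apply_eq, map_add, map_zsmul, X.str.lam_tau, hx, smul_zero, add_zero]

theorem mem_perp_pos_iff (y : X.carrier.Pos) :
    y ∈ f.perp.pos ↔ X.str.lam f.a y = 0 ∧ X.str.mu y f.b = 0 := by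
  refine ⟨fun hy => ⟨hy.1 f.a ⟨stdA 0, rfl⟩, hy.2 f.b ⟨stdB 0, rfl⟩⟩, ?_⟩
  rintro ⟨ha, hb⟩
  refine ⟨?_, ?_⟩
  · rintro _ ⟨x, rfl⟩
    rw [f.neg_apply_eq, map_zsmul, AddMonoidHom.smul_apply, ha, smul_zero]
  · rintro _ ⟨w, rfl⟩
    rw [f.pos_apply_eq, map_add, map_zsmul, hb, X.str.mu_tau_right, ha, zero_smul, smul_zero,
      smul_zero, add_zero]

theorem mapsTo_perp {Y : WallForm P} (φ : WallHom X Y) {g : WallHom (stdWall P 1) Y}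
    (ha : φ.hom.neg f.a = g.a) (hb : φ.hom.pos f.b = g.b) : φ.hom.MapsTo f.perp g.perp := by
  refine ⟨fun x hx => ?_, fun y hy => ?_⟩
  · rw [SetLike.mem_coe, mem_perp_neg_iff] at hx ⊢
    rw [← hb, φ.isWall.1, hx]
  · rw [SetLike.mem_coe, mem_perp_pos_iff] at hy ⊢
    rw [← ha, ← hb, φ.isWall.1, φ.isWall.2.1]
    exact hy

end WallHom

def WallIso.perpCompIso {Y : WallForm P} (e : WallIso X Y) (g : WallHom (stdWall P 1) Y) :
    WallIso (e.invHom.comp g).perp.toWall g.perp.toWall :=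
  WallIso.ofInvOn e.toHom.hom e.invHom.hom
    ((e.invHom.comp g).mapsTo_perp e.toHom (e.right_neg g.a) (e.right_pos g.b))
    (g.mapsTo_perp e.invHom rfl rfl)
    (e.toHom.isWallHom_restrict _) (e.invHom.isWallHom_restrict _)
    ⟨fun x _ => e.left_neg x, fun y _ => e.left_pos y⟩
    ⟨fun x _ => e.right_neg x, fun y _ => e.right_pos y⟩

end Generators

section Exchange

variable {H : Type} [AddCommGroup H] [AddGroup.FG H] {P : FormParameter H} {X : WallForm P}

theorem OrthogonalIn.lam_mu_gens_eq_zero {f g : WallHom (stdWall P 1) X}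
    (h : OrthogonalIn X.str f.hom.rangeSub g.hom.rangeSub) :
    X.str.lam f.a g.b = 0 ∧ X.str.lam g.a f.b = 0 ∧
      X.str.mu f.b g.b = 0 ∧ X.str.mu g.b f.b = 0 := by
  obtain ⟨hgf, hfg'⟩ := (g.mem_perp_pos_iff f.b).1 (h.2.2.2.1 ⟨stdB 0, rfl⟩)
  obtain ⟨hfg, hgf'⟩ := (f.mem_perp_pos_iff g.b).1 (h.2.2.2.2.2 ⟨stdB 0, rfl⟩)
  exact ⟨hfg, hgf, hfg', hgf'⟩

namespace WallHom

variable (f g : WallHom (stdWall P 1) X)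

/-- On `f^⊥` this is the automorphism of `X` swapping the orthogonal summands `f(W)` and `g(W)`:
the coefficients of `g.a`, `g.b` and `τ(g.a, -)` in `x` or `y` are `λ(x, g.b)`, `λ(g.a, y)` and
`μ(y, g.b)`. -/
def exchange : HPairHom X.carrier X.carrier where
  neg := AddMonoidHom.mk' (fun x => x + X.str.lam x g.b • (f.a - g.a)) fun x x' => by
    simp only [map_add, AddMonoidHom.add_apply, add_smul]
    abel
  pos := AddMonoidHom.mk'
    (fun y => y + X.str.lam g.a y • (f.b - g.b) + X.carrier.tau (f.a - g.a) (X.str.mu y g.b))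
    fun y y' => by
      simp only [map_add, AddMonoidHom.add_apply, add_smul]
      abel
  comm x h := by
    simp [X.str.lam_tau, X.str.mu_tau, smul_sub]

@[simp] theorem exchange_neg_apply (x : X.carrier.Neg) :
    (f.exchange g).neg x = x + X.str.lam x g.b • (f.a - g.a) := rfl

@[simp] theorem exchange_pos_apply (y : X.carrier.Pos) :
    (f.exchange g).pos y =
      y + X.str.lam g.a y • (f.b - g.b) + X.carrier.tau (f.a - g.a) (X.str.mu y g.b) := rfl

variable {f g} (h : OrthogonalIn X.str f.hom.rangeSub g.hom.rangeSub)
include h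

theorem exchange_mapsTo : (f.exchange g).MapsTo f.perp g.perp := by
  obtain ⟨hfg, hgf, hfg', -⟩ := h.lam_mu_gens_eq_zero
  refine ⟨fun x _ => (g.mem_perp_neg_iff _).2 ?_, fun y _ => (g.mem_perp_pos_iff _).2 ⟨?_, ?_⟩⟩
  · simp only [exchange_neg_apply, map_add, map_sub, map_zsmul, AddMonoidHom.add_apply,
      AddMonoidHom.sub_apply, AddMonoidHom.smul_apply, hfg, g.lam_a_b, smul_eq_mul]
    ring
  · simp only [exchange_pos_apply, map_add, map_sub, map_zsmul, AddMonoidHom.sub_apply,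
      X.str.lam_tau, hgf, g.lam_a_b, smul_eq_mul]
    ring
  · simp only [exchange_pos_apply, map_add, map_sub, map_zsmul, X.str.mu_tau,
      AddMonoidHom.add_apply, AddMonoidHom.sub_apply, AddMonoidHom.smul_apply, hfg, hfg',
      g.lam_a_b, g.mu_b_b]
    module

theorem exchange_lam {x : X.carrier.Neg} {y : X.carrier.Pos} (hx : x ∈ f.perp.neg)
    (hy : y ∈ f.perp.pos) :
    X.str.lam ((f.exchange g).neg x) ((f.exchange g).pos y) = X.str.lam x y := by
  obtain ⟨hfg, hgf, -, -⟩ := h.lam_mu_gens_eq_zero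
  rw [mem_perp_neg_iff] at hx
  obtain ⟨hy, -⟩ := (f.mem_perp_pos_iff y).1 hy
  simp only [exchange_neg_apply, exchange_pos_apply, map_add, map_sub, map_zsmul,
    X.str.lam_tau, AddMonoidHom.add_apply, AddMonoidHom.sub_apply, AddMonoidHom.smul_apply,
    hx, hy, hfg, hgf, f.lam_a_b, g.lam_a_b, smul_eq_mul]
  ring

theorem exchange_mu {y y' : X.carrier.Pos} (hy : y ∈ f.perp.pos) (hy' : y' ∈ f.perp.pos) :
    X.str.mu ((f.exchange g).pos y) ((f.exchange g).pos y') = X.str.mu y y' := by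
  obtain ⟨hfg, hgf, hfg', hgf'⟩ := h.lam_mu_gens_eq_zero
  obtain ⟨hy₁, hy₂⟩ := (f.mem_perp_pos_iff y).1 hy
  obtain ⟨hy₁', hy₂'⟩ := (f.mem_perp_pos_iff y').1 hy'
  have hy₂'' : X.str.mu f.b y' = 0 := by rw [X.str.mu_symm, hy₂', smul_zero]
  have hgy : X.str.mu g.b y' = P.eps • X.str.mu y' g.b := X.str.mu_symm _ _
  simp only [exchange_pos_apply, map_add, map_sub, map_zsmul, X.str.mu_tau, X.str.mu_tau_right,
    AddMonoidHom.add_apply, AddMonoidHom.sub_apply, AddMonoidHom.smul_apply, X.str.lam_tau,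
    hy₁, hy₂, hy₁', hy₂'', hgy, hfg, hgf, hfg', hgf', f.lam_a_b, g.lam_a_b, f.mu_b_b, g.mu_b_b]
  module

theorem exchange_alphaPos {y : X.carrier.Pos} (hy : y ∈ f.perp.pos) :
    X.str.alphaPos ((f.exchange g).pos y) = X.str.alphaPos y := by
  obtain ⟨hfg, hgf, hfg', hgf'⟩ := h.lam_mu_gens_eq_zero
  obtain ⟨hy₁, hy₂⟩ := (f.mem_perp_pos_iff y).1 hy
  set s := X.str.lam g.a y
  set c := X.str.mu y g.b
  have hv : X.str.mu (f.b - g.b) (f.b - g.b) = 0 := by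
    simp only [map_sub, AddMonoidHom.sub_apply, f.mu_b_b, g.mu_b_b, hfg', hgf', sub_zero]
  have hαv : X.str.alphaPos (f.b - g.b) = 0 := by
    have := X.str.alphaPos_add (f.b - g.b) g.b
    rwa [sub_add_cancel, f.alphaPos_b, g.alphaPos_b, map_sub, AddMonoidHom.sub_apply, hfg',
      g.mu_b_b, sub_zero, map_zero, add_zero, add_zero, eq_comm] at this
  have hτ : X.str.alphaPos (X.carrier.tau (f.a - g.a) c) = 0 := by
    rw [X.str.alphaPos_tau, map_sub, f.alphaNeg_a, g.alphaNeg_a, sub_zero, map_zero,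
      AddMonoidHom.zero_apply]
  have hμ₁ : X.str.mu y (s • (f.b - g.b)) = -(s • c) := by
    rw [map_zsmul, map_sub, hy₂, zero_sub, smul_neg]
  have hμ₂ : X.str.mu (y + s • (f.b - g.b)) (X.carrier.tau (f.a - g.a) c) = P.eps • (s • c) := by
    rw [X.str.mu_tau_right]
    congr 2
    simp only [map_add, map_sub, map_zsmul, AddMonoidHom.sub_apply, hy₁, hfg, hgf, f.lam_a_b,
      g.lam_a_b, smul_eq_mul]
    ring
  rw [exchange_pos_apply, X.str.alphaPos_add, X.str.alphaPos_add,
    X.str.alphaPos_zsmul_of_mu_self_eq_zero hv, hαv, hτ, hμ₁, hμ₂, P.bd_eps, map_neg]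
  abel

theorem exchange_isWallHom :
    IsWallHom (f.perp.restrict X.str) (g.perp.restrict X.str)
      ((f.exchange g).restrict (exchange_mapsTo h)) := by
  refine ⟨fun x y => exchange_lam h x.2 y.2, fun y y' => exchange_mu h y.2 y'.2, fun x => ?_,
    fun y => exchange_alphaPos h y.2⟩
  change X.str.alphaNeg (x + _ • (f.a - g.a)) = X.str.alphaNeg x
  rw [map_add, map_zsmul, map_sub, f.alphaNeg_a, g.alphaNeg_a, sub_zero, smul_zero, add_zero]

theorem exchange_leftInvOn : (g.exchange f).LeftInvOn (f.exchange g) f.perp := by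
  obtain ⟨hfg, hgf, -, hgf'⟩ := h.lam_mu_gens_eq_zero
  refine ⟨fun x hx => ?_, fun y hy => ?_⟩
  · rw [SetLike.mem_coe, mem_perp_neg_iff] at hx
    have hs : X.str.lam ((f.exchange g).neg x) f.b = X.str.lam x g.b := by
      simp only [exchange_neg_apply, map_add, map_sub, map_zsmul, AddMonoidHom.add_apply,
        AddMonoidHom.sub_apply, AddMonoidHom.smul_apply, hx, f.lam_a_b, hgf, smul_eq_mul]
      ring
    rw [exchange_neg_apply _ _ ((f.exchange g).neg x), hs, exchange_neg_apply]
    module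
  · obtain ⟨hy₁, hy₂⟩ := (f.mem_perp_pos_iff y).1 hy
    have hs : X.str.lam f.a ((f.exchange g).pos y) = X.str.lam g.a y := by
      simp only [exchange_pos_apply, map_add, map_sub, map_zsmul, X.str.lam_tau,
        AddMonoidHom.sub_apply, hy₁, hfg, f.lam_a_b, smul_eq_mul]
      ring
    have hc : X.str.mu ((f.exchange g).pos y) f.b = X.str.mu y g.b := by
      simp only [exchange_pos_apply, map_add, map_sub, map_zsmul, X.str.mu_tau,
        AddMonoidHom.add_apply, AddMonoidHom.sub_apply, AddMonoidHom.smul_apply, hy₂,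
        f.mu_b_b, hgf', f.lam_a_b, hgf]
      module
    rw [exchange_pos_apply _ _ ((f.exchange g).pos y), hs, hc, exchange_pos_apply]
    simp only [map_sub, AddMonoidHom.sub_apply]
    module

end WallHom

def WallHom.perpIsoOfOrthogonal {f g : WallHom (stdWall P 1) X}
    (h : OrthogonalIn X.str f.hom.rangeSub g.hom.rangeSub) : WallIso f.perp.toWall g.perp.toWall :=
  WallIso.ofInvOn (f.exchange g) (g.exchange f) (WallHom.exchange_mapsTo h)
    (WallHom.exchange_mapsTo h.symm) (WallHom.exchange_isWallHom h)
    (WallHom.exchange_isWallHom h.symm) (WallHom.exchange_leftInvOn h)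
    (WallHom.exchange_leftInvOn h.symm)

theorem WallHom.nonempty_perpIso_of_reflTransGen {f g : WallHom (stdWall P 1) X}
    (h : Relation.ReflTransGen
      (fun a b : WallHom (stdWall P 1) X => OrthogonalIn X.str a.hom.rangeSub b.hom.rangeSub)
      f g) :
    Nonempty (WallIso f.perp.toWall g.perp.toWall) := by
  induction h with
  | refl => exact ⟨WallIso.refl _⟩
  | tail _ hbc ih => exact ih.map fun e => e.trans (perpIsoOfOrthogonal hbc)

end Exchange

section Inclusions

variable {H : Type} [AddCommGroup H] {P : FormParameter H}

def WallHom.inl (M N : WallForm P) : WallHom M (M.sum N) where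
  hom := HPairHom.inl M.carrier N.carrier
  isWall := by
    refine ⟨fun x y => ?_, fun y y' => ?_, fun x => ?_, fun y => ?_⟩
    · change M.str.lam x y + N.str.lam 0 0 = M.str.lam x y
      simp
    · change M.str.mu y y' + N.str.mu 0 0 = M.str.mu y y'
      simp
    · change M.str.alphaNeg x + N.str.alphaNeg 0 = M.str.alphaNeg x
      simp
    · change M.str.alphaPos y + N.str.alphaPos 0 = M.str.alphaPos y
      rw [N.str.alphaPos_zero, add_zero]

def WallHom.inr (M N : WallForm P) : WallHom N (M.sum N) where
  hom := HPairHom.inr M.carrier N.carrier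
  isWall := by
    refine ⟨fun x y => ?_, fun y y' => ?_, fun x => ?_, fun y => ?_⟩
    · change M.str.lam 0 0 + N.str.lam x y = N.str.lam x y
      simp
    · change M.str.mu 0 0 + N.str.mu y y' = N.str.mu y y'
      simp
    · change M.str.alphaNeg 0 + N.str.alphaNeg x = N.str.alphaNeg x
      simp
    · change M.str.alphaPos 0 + N.str.alphaPos y = N.str.alphaPos y
      rw [M.str.alphaPos_zero, zero_add]

theorem fun_fin_one_eq_zero_iff {A : Type*} [Zero A] (v : Fin 1 → A) : v = 0 ↔ v 0 = 0 :=
  ⟨fun h => congrFun h 0, fun h => funext fun i => by rwa [Fin.fin_one_eq_zero i]⟩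

variable [AddGroup.FG H] (M : WallForm P)

theorem WallHom.mem_inr_perp_neg_iff (x : (M.sum (stdWall P 1)).carrier.Neg) :
    x ∈ (WallHom.inr M (stdWall P 1)).perp.neg ↔ x.2 = 0 := by
  rw [mem_perp_neg_iff]
  change M.str.lam x.1 0 + ∑ i : Fin 1, x.2 i * (Pi.single 0 1 : Fin 1 → ℤ) i = 0 ↔ x.2 = 0
  simp only [map_zero, zero_add, Fin.sum_univ_one, Pi.single_eq_same, mul_one]
  exact (fun_fin_one_eq_zero_iff _).symm

theorem WallHom.mem_inr_perp_pos_iff (y : (M.sum (stdWall P 1)).carrier.Pos) :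
    y ∈ (WallHom.inr M (stdWall P 1)).perp.pos ↔ y.2 = 0 := by
  rw [mem_perp_pos_iff]
  change M.str.lam 0 y.1 + ∑ i : Fin 1, (Pi.single 0 1 : Fin 1 → ℤ) i * y.2.1 i = 0 ∧
      M.str.mu y.1 0 + (∑ i : Fin 1, (Pi.single 0 1 : Fin 1 → ℤ) i • y.2.2 i +
        P.eps • ∑ i : Fin 1, y.2.1 i • (0 : H)) = 0 ↔ y.2 = 0
  simp only [map_zero, AddMonoidHom.zero_apply, zero_add, Fin.sum_univ_one, Pi.single_eq_same,
    one_mul, one_smul, smul_zero, add_zero]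
  refine ⟨fun ⟨h₁, h₂⟩ => ?_, fun h => by rw [h]; exact ⟨rfl, rfl⟩⟩
  exact Prod.ext ((fun_fin_one_eq_zero_iff _).2 h₁) ((fun_fin_one_eq_zero_iff _).2 h₂)

def WallForm.perpInrIso : WallIso (WallHom.inr M (stdWall P 1)).perp.toWall M where
  toHom :=
    { hom :=
        { neg := (AddMonoidHom.fst _ _).comp (AddSubgroup.subtype _)
          pos := (AddMonoidHom.fst _ _).comp (AddSubgroup.subtype _)
          comm _ _ := rfl }
      isWall := by
        refine ⟨fun x y => ?_, fun y y' => ?_, fun x => ?_, fun y => ?_⟩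
        · change _ = M.str.lam x.1.1 y.1.1 + (stdWall P 1).str.lam x.1.2 y.1.2
          rw [(WallHom.mem_inr_perp_neg_iff M x.1).1 x.2, map_zero, AddMonoidHom.zero_apply,
            add_zero]
          rfl
        · change _ = M.str.mu y.1.1 y'.1.1 + (stdWall P 1).str.mu y.1.2 y'.1.2
          rw [(WallHom.mem_inr_perp_pos_iff M y.1).1 y.2, map_zero, AddMonoidHom.zero_apply,
            add_zero]
          rfl
        · change _ = M.str.alphaNeg x.1.1 + 0
          rw [add_zero]
          rfl
        · change _ = M.str.alphaPos y.1.1 + (stdWall P 1).str.alphaPos y.1.2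
          rw [(WallHom.mem_inr_perp_pos_iff M y.1).1 y.2, WallAux.alphaPos_zero, add_zero]
          rfl }
  invHom :=
    { hom :=
        { neg := (AddMonoidHom.inl _ _).codRestrict _ fun _ =>
            (WallHom.mem_inr_perp_neg_iff M _).2 rfl
          pos := (AddMonoidHom.inl _ _).codRestrict _ fun _ =>
            (WallHom.mem_inr_perp_pos_iff M _).2 rfl
          comm x h := Subtype.ext ((HPairHom.inl M.carrier (stdWall P 1).carrier).comm x h) }
      isWall :=
        ⟨fun x y => (WallHom.inl M (stdWall P 1)).isWall.1 x y,
          fun y y' => (WallHom.inl M (stdWall P 1)).isWall.2.1 y y',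
          fun x => (WallHom.inl M (stdWall P 1)).isWall.2.2.1 x,
          fun y => (WallHom.inl M (stdWall P 1)).isWall.2.2.2 y⟩ }
  left_neg x := Subtype.ext (Prod.ext rfl ((WallHom.mem_inr_perp_neg_iff M x.1).1 x.2).symm)
  right_neg _ := rfl
  left_pos y := Subtype.ext (Prod.ext rfl ((WallHom.mem_inr_perp_pos_iff M y.1).1 y.2).symm)
  right_pos _ := rfl

end Inclusions

/-- **Cancelation.** If `M ⊕ W ≅ N ⊕ W` as Wall forms and the
complex `L(M ⊕ W)` is connected, then `M ≅ N` as Wall forms. -/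
theorem statement_7 {H : Type} [AddCommGroup H] [AddGroup.FG H]
    (P : FormParameter H) (M N : WallForm P)
    (e : WallIso (M.sum (stdWall P 1)) (N.sum (stdWall P 1)))
    (hconn : ∀ f f' : WallHom (stdWall P 1) (M.sum (stdWall P 1)),
      Relation.ReflTransGen
        (fun a b : WallHom (stdWall P 1) (M.sum (stdWall P 1)) =>
          OrthogonalIn (M.sum (stdWall P 1)).str a.hom.rangeSub b.hom.rangeSub) f f') :
    Nonempty (WallIso M N) := by
  obtain ⟨i⟩ := WallHom.nonempty_perpIso_of_reflTransGen
    (hconn (WallHom.inr M (stdWall P 1)) (e.invHom.comp (WallHom.inr N (stdWall P 1))))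
  exact ⟨M.perpInrIso.symm.trans (i.trans ((e.perpCompIso _).trans N.perpInrIso))⟩
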